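/- arXiv:2203.13377 — 3 statements merged into one kernel-verified Lean document; each statement's English description precedes it below -/
import Mathlib

section
/- Let ψ : X^n → ℝ^d be a function whose L1 global sensitivity ∇_{ψ,1} = sup over neighboring datasets x_{1:n}, x'_{1:n} of ‖ψ(x_{1:n}) − ψ(x'_{1:n})‖_1 is finite, and let ε > 0. Then the randomized algorithm A(x_{1:n}) = ψ(x_{1:n}) + V, where the coordinates V_1, …, V_d are independent with each V_i distributed as Laplace with scale ∇_{ψ,1}/ε, is ε-differentially private: for every pair of neighboring datasets x_{1:n}, x'_{1:n} and every measurable set O ⊆ ℝ^d, P[A(x_{1:n}) ∈ O] ≤ e^ε · P[A(x'_{1:n}) ∈ O]. -/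
open MeasureTheory

/-- Two datasets are neighbors if they differ in exactly one entry. -/
def Neighbor {X : Type*} {n : ℕ} (x x' : Fin n → X) : Prop :=
  ∃ i, x i ≠ x' i ∧ ∀ j, j ≠ i → x j = x' j

/-- The joint law of `d` independent Laplace random variables with scale `b`,
given by its density with respect to Lebesgue measure on `ℝ^d`. -/
noncomputable def laplacePi (b : ℝ) (d : ℕ) : Measure (Fin d → ℝ) :=
  volume.withDensity fun v => ENNReal.ofReal (∏ i, 1 / (2 * b) * Real.exp (-|v i| / b))

/-!
Translating the noise by `z` shifts the product Laplace density, and by the triangle inequality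
`|y - z'| ≤ |y - z| + |z - z'|` the density centred at `z` is at most `exp (‖z - z'‖₁ / b)` times
the density centred at `z'`. With `b = Δ / ε` and `‖ψ x - ψ x'‖₁ ≤ Δ` this factor is at most
`exp ε`, and integrating the pointwise bound over `O` gives the claim.
-/

theorem withDensity_map_add_left {G : Type*} [MeasurableSpace G] [AddGroup G] [MeasurableAdd G]
    (μ : Measure G) [μ.IsAddLeftInvariant] (f : G → ENNReal) (z : G) :
    (μ.withDensity f).map (z + ·) = μ.withDensity fun y => f (-z + y) := by
  ext O hO
  rw [Measure.map_apply (measurable_const_add z) hO,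
    withDensity_apply _ (measurable_const_add z hO), withDensity_apply _ hO,
    ← (measurePreserving_add_left μ z).setLIntegral_comp_preimage_emb
      (MeasurableEquiv.addLeft z).measurableEmbedding (fun y => f (-z + y))]
  simp only [neg_add_cancel_left]

theorem Real.exp_neg_abs_sub_div_le {b : ℝ} (hb : 0 ≤ b) (y z z' : ℝ) :
    Real.exp (-|y - z| / b) ≤ Real.exp (|z - z'| / b) * Real.exp (-|y - z'| / b) := by
  rw [← Real.exp_add, Real.exp_le_exp, ← add_div]
  apply div_le_div_of_nonneg_right _ hb
  linarith [abs_sub_le y z z']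

noncomputable def laplacePiDensity {ι : Type*} [Fintype ι] (b : ℝ) (v : ι → ℝ) : ℝ :=
  ∏ i, 1 / (2 * b) * Real.exp (-|v i| / b)

theorem laplacePiDensity_sub_le {ι : Type*} [Fintype ι] {b : ℝ} (hb : 0 ≤ b) (y z z' : ι → ℝ) :
    laplacePiDensity b (y - z)
      ≤ Real.exp ((∑ i, |z i - z' i|) / b) * laplacePiDensity b (y - z') := by
  unfold laplacePiDensity
  calc ∏ i, 1 / (2 * b) * Real.exp (-|(y - z) i| / b)
      ≤ ∏ i, Real.exp (|z i - z' i| / b) * (1 / (2 * b) * Real.exp (-|(y - z') i| / b)) := by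
        refine Finset.prod_le_prod (fun i _ => by positivity) fun i _ => ?_
        rw [mul_left_comm]
        exact mul_le_mul_of_nonneg_left (Real.exp_neg_abs_sub_div_le hb _ _ _) (by positivity)
    _ = Real.exp ((∑ i, |z i - z' i|) / b) * ∏ i, 1 / (2 * b) * Real.exp (-|(y - z') i| / b) := by
        rw [Finset.prod_mul_distrib, ← Real.exp_sum, Finset.sum_div]

theorem laplacePi_eq_withDensity (b : ℝ) (d : ℕ) :
    laplacePi b d = volume.withDensity fun v => ENNReal.ofReal (laplacePiDensity b v) :=
  rfl

theorem laplacePi_map_add_le {d : ℕ} {b : ℝ} (hb : 0 ≤ b) (z z' : Fin d → ℝ) :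
    (laplacePi b d).map (z + ·)
      ≤ ENNReal.ofReal (Real.exp ((∑ i, |z i - z' i|) / b)) • (laplacePi b d).map (z' + ·) := by
  rw [laplacePi_eq_withDensity, withDensity_map_add_left, withDensity_map_add_left,
    ← withDensity_smul' _ _ ENNReal.ofReal_ne_top]
  refine withDensity_mono (ae_of_all _ fun y => ?_)
  simp only [Pi.smul_apply, smul_eq_mul, neg_add_eq_sub]
  rw [← ENNReal.ofReal_mul (Real.exp_nonneg _)]
  exact ENNReal.ofReal_le_ofReal (laplacePiDensity_sub_le hb y z z')

theorem laplace_mechanism_differentially_private_general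
    {X : Type*} {n d : ℕ} (ψ : (Fin n → X) → Fin d → ℝ)
    (Δ : ℝ)
    (hsens : ∀ x x' : Fin n → X, Neighbor x x' → ∑ i, |ψ x i - ψ x' i| ≤ Δ)
    (ε : ℝ) (hε : 0 < ε)
    (A : (Fin n → X) → Measure (Fin d → ℝ))
    (hA : ∀ x, A x = (laplacePi (Δ / ε) d).map fun v i => ψ x i + v i) :
    ∀ x x' : Fin n → X, Neighbor x x' → ∀ O : Set (Fin d → ℝ), MeasurableSet O →
      A x O ≤ ENNReal.ofReal (Real.exp ε) * A x' O := by
  intro x x' hxx' O _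
  have hS := hsens x x' hxx'
  have hΔ : 0 ≤ Δ := (Finset.sum_nonneg fun i _ => abs_nonneg _).trans hS
  -- For `Δ = 0` the scale `Δ / ε` is `0`; the bound still holds since division by `0` gives `0`.
  have hratio : (∑ i, |ψ x i - ψ x' i|) / (Δ / ε) ≤ ε := by
    rw [div_div_eq_mul_div, mul_div_right_comm]
    exact mul_le_of_le_one_left hε.le (div_le_one_of_le₀ hS hΔ)
  calc A x O
      ≤ ENNReal.ofReal (Real.exp ((∑ i, |ψ x i - ψ x' i|) / (Δ / ε))) * A x' O := by
        rw [hA, hA]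
        exact laplacePi_map_add_le (div_nonneg hΔ hε.le) (ψ x) (ψ x') O
    _ ≤ ENNReal.ofReal (Real.exp ε) * A x' O := by
        gcongr

/-- The Laplace mechanism, adding i.i.d. Laplace noise of scale `Δ/ε` to each coordinate of
`ψ(x_{1:n})`, where `Δ` bounds the L1 sensitivity of `ψ`, is `ε`-differentially private. -/
theorem laplace_mechanism_differentially_private
    {X : Type*} {n d : ℕ} (ψ : (Fin n → X) → Fin d → ℝ)
    (Δ : ℝ) (hΔ : 0 ≤ Δ)
    (hsens : ∀ x x' : Fin n → X, Neighbor x x' → ∑ i, |ψ x i - ψ x' i| ≤ Δ)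
    (ε : ℝ) (hε : 0 < ε)
    (A : (Fin n → X) → Measure (Fin d → ℝ))
    (hA : ∀ x, A x = (laplacePi (Δ / ε) d).map fun v i => ψ x i + v i) :
    ∀ x x' : Fin n → X, Neighbor x x' → ∀ O : Set (Fin d → ℝ), MeasurableSet O →
      A x O ≤ ENNReal.ofReal (Real.exp ε) * A x' O :=
  laplace_mechanism_differentially_private_general ψ Δ hsens ε hε A hA
end

section
/- Let η be a probability density on Θ, let μ be a probability density on a space Z, let q(θ'|θ) be a Markov transition density on Θ, let R(z'|z) be a Markov transition density on Z, and let h(y | z, θ) be a strictly positive measurable function. Fix y, N ≥ 1, θ ∈ Θ, and z⁽¹⁾ ∈ Z, and define π(θ, θ', z⁽¹⁾,…,z⁽ᴺ⁾, k) = η(θ) μ(z⁽¹⁾) h(y | z⁽¹⁾, θ) q(θ'|θ) ∏_{i=2}^N R(z⁽ⁱ⁾ | z⁽¹⁾) · h(y | z⁽ᵏ⁾, θ') / Σ_{k'=1}^N h(y | z⁽ᵏ'⁾, θ'). Then integrating out θ' over Θ, z⁽²⁾,…,z⁽ᴺ⁾ over Z, and summing over k ∈ {1,…,N} recovers the unnormalized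 target: ∫_Θ ∫_{Z^{N−1}} Σ_{k=1}^N π(θ, θ', z⁽¹⁾,…,z⁽ᴺ⁾, k) dz⁽²⁾⋯dz⁽ᴺ⁾ dθ' = η(θ) μ(z⁽¹⁾) h(y | z⁽¹⁾, θ). -/
open MeasureTheory

theorem Finset.sum_mul_div_sum_self {ι K : Type*} [DivisionSemiring K] (s : Finset ι) (a : K)
    {w : ι → K} (hw : ∑ j ∈ s, w j ≠ 0) :
    ∑ i ∈ s, a * w i / ∑ j ∈ s, w j = a := by
  rw [← Finset.sum_div, ← Finset.mul_sum, mul_div_assoc, div_self hw, mul_one]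

theorem mhaar_marginalization_general
    {Θ Z Y : Type*} [MeasurableSpace Θ] [MeasurableSpace Z]
    (νΘ : Measure Θ) (νZ : Measure Z) [SigmaFinite νZ]
    (η : Θ → ℝ) (μ : Z → ℝ) (q : Θ → Θ → ℝ) (R : Z → Z → ℝ)
    (h : Y → Z → Θ → ℝ)
    (hq1 : ∀ θ, ∫ θ', q θ θ' ∂νΘ = 1)
    (hR1 : ∀ z, ∫ z', R z z' ∂νZ = 1)
    (hpos : ∀ y z θ, 0 < h y z θ)
    (y : Y) (m : ℕ) (θ : Θ) (z1 : Z) :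
    (∫ θ', ∫ t : Fin m → Z,
        ∑ k : Fin (m + 1),
          η θ * μ z1 * h y z1 θ * q θ θ' * (∏ i, R z1 (t i)) *
            h y ((Fin.cons z1 t : Fin (m + 1) → Z) k) θ' / ∑ k' : Fin (m + 1), h y ((Fin.cons z1 t : Fin (m + 1) → Z) k') θ'
      ∂(Measure.pi fun _ : Fin m => νZ) ∂νΘ)
      = η θ * μ z1 * h y z1 θ := by
  have hweights (θ' : Θ) (t : Fin m → Z) :
      ∑ k : Fin (m + 1), h y ((Fin.cons z1 t : Fin (m + 1) → Z) k) θ' ≠ 0 :=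
    (Finset.sum_pos (fun k _ => hpos y _ θ') Finset.univ_nonempty).ne'
  simp only [Finset.sum_mul_div_sum_self _ _ (hweights _ _)]
  simp_rw [integral_const_mul, integral_fintype_prod_eq_pow, hR1, one_pow, mul_one,
    integral_const_mul, hq1, mul_one]

/-- Marginalization identity underlying the MHAAR algorithm (with `N = m + 1 ≥ 1` copies of
the auxiliary variable, coordinate `0` playing the role of `z⁽¹⁾`): integrating the extended
density over `θ'`, the refreshed copies `z⁽²⁾, …, z⁽ᴺ⁾`, and the index `k` recovers the
unnormalized target `η(θ) μ(z⁽¹⁾) h(y | z⁽¹⁾, θ)`. -/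
theorem mhaar_marginalization
    {Θ Z Y : Type*} [MeasurableSpace Θ] [MeasurableSpace Z]
    (νΘ : Measure Θ) (νZ : Measure Z) [SigmaFinite νΘ] [SigmaFinite νZ]
    (η : Θ → ℝ) (μ : Z → ℝ) (q : Θ → Θ → ℝ) (R : Z → Z → ℝ)
    (h : Y → Z → Θ → ℝ)
    (hη0 : ∀ θ, 0 ≤ η θ) (hηint : Integrable η νΘ) (hη1 : ∫ θ, η θ ∂νΘ = 1)
    (hμ0 : ∀ z, 0 ≤ μ z) (hμint : Integrable μ νZ) (hμ1 : ∫ z, μ z ∂νZ = 1)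
    (hq0 : ∀ θ θ', 0 ≤ q θ θ') (hqm : ∀ θ, Measurable (q θ))
    (hqint : ∀ θ, Integrable (q θ) νΘ) (hq1 : ∀ θ, ∫ θ', q θ θ' ∂νΘ = 1)
    (hR0 : ∀ z z', 0 ≤ R z z') (hRm : ∀ z, Measurable (R z))
    (hRint : ∀ z, Integrable (R z) νZ) (hR1 : ∀ z, ∫ z', R z z' ∂νZ = 1)
    (hpos : ∀ y z θ, 0 < h y z θ)
    (y : Y) (m : ℕ) (θ : Θ) (z1 : Z) :
    (∫ θ', ∫ t : Fin m → Z,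
        ∑ k : Fin (m + 1),
          η θ * μ z1 * h y z1 θ * q θ θ' * (∏ i, R z1 (t i)) *
            h y ((Fin.cons z1 t : Fin (m + 1) → Z) k) θ' / ∑ k' : Fin (m + 1), h y ((Fin.cons z1 t : Fin (m + 1) → Z) k') θ'
      ∂(Measure.pi fun _ : Fin m => νZ) ∂νΘ)
      = η θ * μ z1 * h y z1 θ :=
  mhaar_marginalization_general νΘ νZ η μ q R h hq1 hR1 hpos y m θ z1
end

section
/- Let η, q, μ, R, h be as follows: η a positive probability density on Θ, q(θ'|θ) a positive transition density on Θ, h(y|z,θ) a strictly positive function, and suppose the joint density m(z₁,…,z_N) := μ(z₁) ∏_{i=2}^N R(z_i | z₁) is exchangeable, i.e., invariant under every permutation of (z₁,…,z_N). Define π(θ, θ', z₁,…,z_N, k) = η(θ) m(z₁,…,z_N) h(y|z₁,θ) q(θ'|θ) · h(y|z_k,θ') / Σ_{j=1}^N h(y|z_j,θ'). Then for every k ∈ {1,…,N}, writing z̃ for the vector obtained from (z₁,…,z_N) by swapping coordinates 1 and k, the ratio π(θ', θ, z̃, k) / π(θ, θ', z₁,…,z_N, k) equals [q(θ|θ') η(θ')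 Σ_{j=1}^N h(y|z_j,θ')] / [q(θ'|θ) η(θ) Σ_{j=1}^N h(y|z_j,θ)]. -/
/-! Exchangeability gives `m (z ∘ swap 0 k) = m z`, and every sum over `j` is invariant under
the swap, so only the first- and `k`-th-coordinate likelihood factors change places. They
cancel crosswise between numerator and denominator, leaving the averaged ratio. -/

lemma swap_move_ratio {η η' q q' M a b S S' : ℝ} (hη : η ≠ 0) (hq : q ≠ 0) (hM : M ≠ 0)
    (ha : a ≠ 0) (hb : b ≠ 0) (hS : S ≠ 0) (hS' : S' ≠ 0) :
    η' * M * b * q' * a / S / (η * M * a * q * b / S') = q' * η' * S' / (q * η * S) := by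
  field_simp

theorem mhaar_acceptance_ratio_general
    {Θ Z Y : Type*} (N : ℕ)
    (η : Θ → ℝ) (q : Θ → Θ → ℝ) (h : Y → Z → Θ → ℝ)
    (m : (Fin (N + 1) → Z) → ℝ)
    (hη : ∀ θ, 0 < η θ) (hq : ∀ θ θ', 0 < q θ θ')
    (hh : ∀ y z θ, 0 < h y z θ)
    (hexch : ∀ (σ : Equiv.Perm (Fin (N + 1))) (w : Fin (N + 1) → Z), m (w ∘ σ) = m w)
    (π : Θ → Θ → (Fin (N + 1) → Z) → Fin (N + 1) → ℝ)
    (y : Y)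
    (hπ : ∀ a b w j, π a b w j =
      η a * m w * h y (w 0) a * q a b * h y (w j) b / ∑ i, h y (w i) b)
    (θ θ' : Θ) (z : Fin (N + 1) → Z) (hmz : m z ≠ 0) (k : Fin (N + 1)) :
    π θ' θ (z ∘ Equiv.swap 0 k) k / π θ θ' z k
      = (q θ' θ * η θ' * ∑ j, h y (z j) θ') / (q θ θ' * η θ * ∑ j, h y (z j) θ) := by
  have hm_swap : m (z ∘ Equiv.swap 0 k) = m z := hexch _ z
  have hsum_swap (t : Θ) : ∑ i, h y ((z ∘ Equiv.swap 0 k) i) t = ∑ i, h y (z i) t :=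
    Equiv.sum_comp (Equiv.swap 0 k) (fun i => h y (z i) t)
  have hsum_pos (t : Θ) : 0 < ∑ i, h y (z i) t :=
    Finset.sum_pos (fun i _ => hh y (z i) t) Finset.univ_nonempty
  rw [hπ, hπ, hm_swap, hsum_swap, Function.comp_apply, Function.comp_apply,
    Equiv.swap_apply_left, Equiv.swap_apply_right]
  exact swap_move_ratio (hη θ).ne' (hq θ θ').ne' hmz (hh y (z 0) θ).ne' (hh y (z k) θ').ne'
    (hsum_pos θ).ne' (hsum_pos θ').ne'

/-- Acceptance-ratio simplification in the proof of Proposition 1 (with `N + 1 ≥ 1` auxiliary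
variables, coordinate `0` playing the role of `z₁`): when the proposal law
`m(z₁,…,z_N) = μ(z₁) ∏_{i≥2} R(z_i|z₁)` is exchangeable, the Metropolis–Hastings acceptance
ratio of the swap move `(θ ↔ θ', z₁ ↔ z_k)` on the extended target reduces to the averaged
acceptance ratio `[q(θ|θ')η(θ') Σ_j h(y|z_j,θ')] / [q(θ'|θ)η(θ) Σ_j h(y|z_j,θ)]`. -/
theorem mhaar_acceptance_ratio
    {Θ Z Y : Type*} (N : ℕ)
    (η : Θ → ℝ) (q : Θ → Θ → ℝ) (h : Y → Z → Θ → ℝ)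
    (μZ : Z → ℝ) (R : Z → Z → ℝ)
    (m : (Fin (N + 1) → Z) → ℝ)
    (hm : ∀ w : Fin (N + 1) → Z, m w = μZ (w 0) * ∏ i : Fin N, R (w 0) (w i.succ))
    (hη : ∀ θ, 0 < η θ) (hq : ∀ θ θ', 0 < q θ θ')
    (hh : ∀ y z θ, 0 < h y z θ)
    (hexch : ∀ (σ : Equiv.Perm (Fin (N + 1))) (w : Fin (N + 1) → Z), m (w ∘ σ) = m w)
    (π : Θ → Θ → (Fin (N + 1) → Z) → Fin (N + 1) → ℝ)
    (y : Y)
    (hπ : ∀ a b w j, π a b w j =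
      η a * m w * h y (w 0) a * q a b * h y (w j) b / ∑ i, h y (w i) b)
    (θ θ' : Θ) (z : Fin (N + 1) → Z) (hmz : m z ≠ 0) (k : Fin (N + 1)) :
    π θ' θ (z ∘ Equiv.swap 0 k) k / π θ θ' z k
      = (q θ' θ * η θ' * ∑ j, h y (z j) θ') / (q θ θ' * η θ * ∑ j, h y (z j) θ) :=
  mhaar_acceptance_ratio_general N η q h m hη hq hh hexch π y hπ θ θ' z hmz k
end
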